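/- Let ∇ be a linear connection with ∇P = 0 for an almost product structure P. Define S_P(X,Y) = (∇_X P)Y + P((∇_{PX} P)Y). Then S_P = 0. Conversely, on an almost product Riemannian manifold (pure metric, Levi-Civita connection), S_P = 0 implies ∇P = 0. -/

import Mathlib

/-!
Write `Q X Y = (∇_X P) Y`. Since `P² = I`, each `Q X` anticommutes with `P`; since the metric is
pure and parallel, each `Q X` is self-adjoint; and `S_P = 0` says `Q (P X) = Q X ∘ P`. These
three facts make `Q (P X)` anti-self-adjoint as well:
`h Z (Q (PX) Y) = h Z (Q X (PY)) = h (P (Q X Z)) Y = -h (Q X (PZ)) Y = -h Z (Q (PX) Y)`,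
so `Q (P X) = 0` as `2` is invertible, and `Q X = Q (P (P X)) = 0`.
-/

section CovDerivEnd

variable {A : Type*} [CommRing A] {V : Type*} [AddCommGroup V] [Module A V]

/-- `covDerivEnd nabla P X Y` is `(∇_X P) Y`. -/
def covDerivEnd (nabla : V → V → V) (P : V →ₗ[A] V) (X Y : V) : V :=
  nabla X (P Y) - P (nabla X Y)

variable {nabla : V → V → V} {P : V →ₗ[A] V}

lemma covDerivEnd_map_right (hP : Function.Involutive P) (X Y : V) :
    covDerivEnd nabla P X (P Y) = -P (covDerivEnd nabla P X Y) := by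
  simp only [covDerivEnd, map_sub, hP _]
  abel

lemma covDerivEnd_selfAdjoint {D : V → A → A} {h : V →ₗ[A] V →ₗ[A] A}
    (hpure : ∀ X Y, h (P X) Y = h X (P Y))
    (hcompat : ∀ X Y Z, D X (h Y Z) = h (nabla X Y) Z + h Y (nabla X Z)) (X Y Z : V) :
    h (covDerivEnd nabla P X Y) Z = h Y (covDerivEnd nabla P X Z) := by
  have hY := hcompat X (P Y) Z
  have hZ := hcompat X Y (P Z)
  rw [hpure] at hY
  simp only [covDerivEnd, map_sub, LinearMap.sub_apply, hpure (nabla X Y), ← hpure Y]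
  linear_combination hZ - hY

lemma covDerivEnd_map_left_of_S_eq_zero (hP : Function.Involutive P)
    (hS : ∀ X Y, covDerivEnd nabla P X Y + P (covDerivEnd nabla P (P X) Y) = 0) (X Y : V) :
    covDerivEnd nabla P (P X) Y = covDerivEnd nabla P X (P Y) := by
  rw [covDerivEnd_map_right hP, ← hP (covDerivEnd nabla P (P X) Y),
    eq_neg_of_add_eq_zero_right (hS X Y), map_neg]

end CovDerivEnd

lemma eq_zero_of_selfAdjoint_of_anticomm_of_map_left {A : Type*} [CommRing A]
    {V : Type*} [AddCommGroup V] [Module A V] {P : V →ₗ[A] V} {h : V →ₗ[A] V →ₗ[A] A}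
    {T : V → V → V} (h2 : IsUnit (2 : A)) (hP : Function.Involutive P)
    (hpure : ∀ X Y, h (P X) Y = h X (P Y)) (hnondeg : ∀ Y, (∀ X, h X Y = 0) → Y = 0)
    (hself : ∀ X Y Z, h (T X Y) Z = h Y (T X Z)) (hanti : ∀ X Y, T X (P Y) = -P (T X Y))
    (hleft : ∀ X Y, T (P X) Y = T X (P Y)) (X Y : V) :
    T X Y = 0 := by
  have hPX : ∀ X Y, T (P X) Y = 0 := fun X Y ↦ hnondeg _ fun Z ↦ by
    have hneg : h Z (T (P X) Y) = -h Z (T (P X) Y) := calc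
      h Z (T (P X) Y) = h (P (T X Z)) Y := by rw [hleft, ← hself, hpure]
      _ = -h Z (T (P X) Y) := by
        rw [← neg_neg (P _), ← hanti, map_neg, LinearMap.neg_apply, ← hleft, hself]
    rw [← h2.mul_right_eq_zero, two_mul]
    exact add_eq_zero_iff_eq_neg.mpr hneg
  simpa only [hP X] using hPX (P X) Y

theorem parallel_iff_S_vanishes_general
    (A : Type*) [CommRing A] [Algebra ℝ A]
    (V : Type*) [AddCommGroup V] [Module A V]
    (nabla : V → V → V) (D : V → A → A)
    (P : V →ₗ[A] V) (hP : P ∘ₗ P = LinearMap.id)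
    (h : V →ₗ[A] V →ₗ[A] A)
    (hpure : ∀ X Y : V, h (P X) Y = h X (P Y))
    (hnondeg : ∀ Y : V, (∀ X : V, h X Y = 0) → Y = 0)
    (hcompat : ∀ X Y Z : V, D X (h Y Z) = h (nabla X Y) Z + h Y (nabla X Z)) :
    ((∀ X Y : V, nabla X (P Y) - P (nabla X Y) = 0) →
      (∀ X Y : V, (nabla X (P Y) - P (nabla X Y)) +
        P (nabla (P X) (P Y) - P (nabla (P X) Y)) = 0)) ∧
    ((∀ X Y : V, (nabla X (P Y) - P (nabla X Y)) +
        P (nabla (P X) (P Y) - P (nabla (P X) Y)) = 0) →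
      (∀ X Y : V, nabla X (P Y) - P (nabla X Y) = 0)) := by
  have hinv : Function.Involutive P := LinearMap.congr_fun hP
  have h2 : IsUnit (2 : A) := by
    simpa only [map_ofNat] using (isUnit_of_invertible (2 : ℝ)).map (algebraMap ℝ A)
  refine ⟨fun hpar X Y ↦ by rw [hpar, hpar, map_zero, add_zero], fun hS ↦ ?_⟩
  exact eq_zero_of_selfAdjoint_of_anticomm_of_map_left h2 hinv hpure hnondeg
    (covDerivEnd_selfAdjoint hpure hcompat) (covDerivEnd_map_right hinv)
    (covDerivEnd_map_left_of_S_eq_zero hinv hS)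

/-- Let `∇` be a linear connection on an almost product Riemannian manifold, i.e. the
metric `h` is pure with respect to `P` and `∇` is the Levi-Civita connection (metric
compatible, where `D X` denotes differentiation of functions along `X`).  With
`S_P(X,Y) = (∇_X P)Y + P((∇_{PX}P)Y)`:  if `∇P = 0` then `S_P = 0`, and conversely
`S_P = 0` implies `∇P = 0`. -/
theorem parallel_iff_S_vanishes
    (A : Type*) [CommRing A] [Algebra ℝ A]
    (V : Type*) [AddCommGroup V] [Module A V]
    (nabla : V → V → V) (D : V → A → A)
    (P : V →ₗ[A] V) (hP : P ∘ₗ P = LinearMap.id)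
    (h : V →ₗ[A] V →ₗ[A] A)
    (hsymm : ∀ X Y : V, h X Y = h Y X)
    (hpure : ∀ X Y : V, h (P X) Y = h X (P Y))
    (hnondeg : ∀ Y : V, (∀ X : V, h X Y = 0) → Y = 0)
    (haddl : ∀ X Y Z : V, nabla (X + Y) Z = nabla X Z + nabla Y Z)
    (haddr : ∀ X Y Z : V, nabla X (Y + Z) = nabla X Y + nabla X Z)
    (hfunl : ∀ (a : A) (X Y : V), nabla (a • X) Y = a • nabla X Y)
    (hleib : ∀ (a : A) (X Y : V), nabla X (a • Y) = D X a • Y + a • nabla X Y)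
    (hcompat : ∀ X Y Z : V, D X (h Y Z) = h (nabla X Y) Z + h Y (nabla X Z)) :
    ((∀ X Y : V, nabla X (P Y) - P (nabla X Y) = 0) →
      (∀ X Y : V, (nabla X (P Y) - P (nabla X Y)) +
        P (nabla (P X) (P Y) - P (nabla (P X) Y)) = 0)) ∧
    ((∀ X Y : V, (nabla X (P Y) - P (nabla X Y)) +
        P (nabla (P X) (P Y) - P (nabla (P X) Y)) = 0) →
      (∀ X Y : V, nabla X (P Y) - P (nabla X Y) = 0)) :=
  parallel_iff_S_vanishes_general A V nabla D P hP h hpure hnondeg hcompat
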